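/- arXiv:2012.05124 — 5 statements merged into one kernel-verified Lean document; each statement's English description precedes it below -/
import Mathlib

section
/- Let c : ℕ × ℕ → ℝ be a family of real numbers (structure constants, indexed so that c (k,i) is the coefficient c_{ki}). Suppose that for every square-summable real sequence v = (v_i)_{i∈ℕ} the double family (v_i · c_{ki})_{(k,i)∈ℕ×ℕ} is square-summable, i.e. ∑_{k=1}^∞ ∑_{i=1}^∞ |v_i c_{ki}|² < ∞. Then for every pair of square-summable sequences v, w the family (v_i w_i c_{ki})_{i∈ℕ} is summable for each k, the sequence k ↦ ∑_{i=1}^∞ v_i w_i c_{ki} is square-summable, and ∑_{k=1}^∞ |∑_{i=1}^∞ v_i w_i c_{ki}|² ≤ M_v² · ‖w‖², where M_v := (∑_{k=1}^∞ ∑_{i=1}^∞ |v_i c_{ki}|²)^{1/2} and ‖w‖² = ∑_{i=1}^∞ |w_i|². -/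
/-!
For each `k`, Cauchy–Schwarz in `ℓ²` bounds `|(v·w)_k|²` by `(∑ᵢ |vᵢ c_{ki}|²) ‖w‖²`;
summing these row bounds over `k` gives `M_v² ‖w‖²`.
-/

section

variable {ι : Type*} {f g : ι → ℝ}

lemma memℓp_two_of_summable_sq (hf : Summable fun i => f i ^ 2) :
    Memℓp f 2 :=
  memℓp_gen (by simpa [Real.norm_eq_abs, sq_abs] using hf)

lemma summable_mul_of_summable_sq (hf : Summable fun i => f i ^ 2)
    (hg : Summable fun i => g i ^ 2) : Summable fun i => f i * g i := by
  simpa [mul_comm] using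
    lp.summable_inner (𝕜 := ℝ) (⟨f, memℓp_two_of_summable_sq hf⟩ : lp (fun _ : ι => ℝ) 2)
      ⟨g, memℓp_two_of_summable_sq hg⟩

lemma sq_tsum_mul_le (hf : Summable fun i => f i ^ 2) (hg : Summable fun i => g i ^ 2) :
    (∑' i, f i * g i) ^ 2 ≤ (∑' i, f i ^ 2) * ∑' i, g i ^ 2 := by
  let F : lp (fun _ : ι => ℝ) 2 := ⟨f, memℓp_two_of_summable_sq hf⟩
  let G : lp (fun _ : ι => ℝ) 2 := ⟨g, memℓp_two_of_summable_sq hg⟩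
  have := real_inner_mul_inner_self_le F G
  simp only [lp.inner_eq_tsum] at this
  simpa [F, G, sq, mul_comm] using this

end

section

variable {κ ι : Type*} {a : κ × ι → ℝ} {w : ι → ℝ}

lemma sq_tsum_mul_le_tsum_sq_mul (ha : Summable fun ki => a ki ^ 2)
    (hw : Summable fun i => w i ^ 2) (k : κ) :
    (∑' i, a (k, i) * w i) ^ 2 ≤ (∑' i, a (k, i) ^ 2) * ∑' i, w i ^ 2 :=
  sq_tsum_mul_le (ha.prod_factor k) hw

lemma summable_sq_tsum_mul (ha : Summable fun ki => a ki ^ 2)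
    (hw : Summable fun i => w i ^ 2) :
    Summable fun k => (∑' i, a (k, i) * w i) ^ 2 :=
  .of_nonneg_of_le (fun _ => sq_nonneg _) (sq_tsum_mul_le_tsum_sq_mul ha hw)
    (ha.prod.mul_right _)

lemma tsum_sq_tsum_mul_le (ha : Summable fun ki => a ki ^ 2)
    (hw : Summable fun i => w i ^ 2) :
    ∑' k, (∑' i, a (k, i) * w i) ^ 2 ≤ (∑' ki, a ki ^ 2) * ∑' i, w i ^ 2 :=
  calc ∑' k, (∑' i, a (k, i) * w i) ^ 2
      ≤ ∑' k, (∑' i, a (k, i) ^ 2) * ∑' i, w i ^ 2 :=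
        (summable_sq_tsum_mul ha hw).tsum_le_tsum (sq_tsum_mul_le_tsum_sq_mul ha hw)
          (ha.prod.mul_right _)
    _ = (∑' ki, a ki ^ 2) * ∑' i, w i ^ 2 := by rw [tsum_mul_right, ha.tsum_prod]

end

/-- If for every square-summable `v` the double family `(v i * c (k,i))`
is square-summable, then for square-summable `v, w` the product sequence
`k ↦ ∑' i, v i * w i * c (k,i)` is well defined, square-summable, and its ℓ²-norm
squared is bounded by `M_v² ‖w‖²` where `M_v² = ∑∑ |v_i c_{ki}|²`. -/
theorem hilbert_evolution_product_bound (c : ℕ × ℕ → ℝ)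
    (h : ∀ v : ℕ → ℝ, Summable (fun i => |v i| ^ 2) →
      Summable (fun ki : ℕ × ℕ => |v ki.2 * c ki| ^ 2)) :
    ∀ v w : ℕ → ℝ, Summable (fun i => |v i| ^ 2) → Summable (fun i => |w i| ^ 2) →
      (∀ k, Summable (fun i => v i * w i * c (k, i))) ∧
      Summable (fun k => |∑' i, v i * w i * c (k, i)| ^ 2) ∧
      ∑' k, |∑' i, v i * w i * c (k, i)| ^ 2 ≤
        (∑' ki : ℕ × ℕ, |v ki.2 * c ki| ^ 2) * ∑' i, |w i| ^ 2 := by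
  intro v w hv hw
  have hvc := h v hv
  simp only [sq_abs] at hvc hw ⊢
  simp only [mul_right_comm (v _) (w _)]
  refine ⟨fun k => ?_, ?_, ?_⟩
  · exact summable_mul_of_summable_sq (hvc.prod_factor k) hw
  · exact summable_sq_tsum_mul (a := fun ki => v ki.2 * c ki) hvc hw
  · exact tsum_sq_tsum_mul_le (a := fun ki => v ki.2 * c ki) hvc hw
end

section
/- Let p : ℕ × ℕ → ℝ be a row-stochastic kernel: p(i,k) ≥ 0 for all i, k and ∑_{k=1}^∞ p(i,k) = 1 for every i. Then sup { ∑_{k=1}^∞ p(i,k)² : i ∈ ℕ } ≤ 1; consequently, setting c_{ki} := p(i,k), for all square-summable real sequences v, w the sequence k ↦ ∑_{i=1}^∞ v_i w_i p(i,k) is square-summable with ∑_{k=1}^∞ |∑_{i=1}^∞ v_i w_i p(i,k)|² ≤ ‖v‖² ‖w‖². -/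
/-!
Since `0 ≤ p (i, k) ≤ 1`, we have `p (i, k) ^ 2 ≤ p (i, k)`, which bounds every row in `ℓ²`.
For the product put `a i = |v i| * |w i|` and `g k = ∑' i, a i * p (i, k)`. Then
`|(v · w) k| ≤ g k ≤ ∑' i, a i =: S`, while summing the nonnegative double series row by row
gives `∑' k, g k = S`; hence `∑' k, g k ^ 2 ≤ S * S`, and `S ^ 2 ≤ ‖v‖² ‖w‖²` by Cauchy–Schwarz.
-/

open Real in
theorem summable_mul_and_sq_tsum_mul_le {ι : Type*} {f g : ι → ℝ} (hf0 : ∀ i, 0 ≤ f i)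
    (hg0 : ∀ i, 0 ≤ g i) (hf : Summable fun i => f i ^ 2) (hg : Summable fun i => g i ^ 2) :
    Summable (fun i => f i * g i) ∧
      (∑' i, f i * g i) ^ 2 ≤ (∑' i, f i ^ 2) * ∑' i, g i ^ 2 := by
  have hholder := summable_and_inner_le_Lp_mul_Lq_tsum_of_nonneg HolderConjugate.two_two hf0 hg0
    (by simpa only [rpow_two] using hf) (by simpa only [rpow_two] using hg)
  simp only [rpow_two, ← sqrt_eq_rpow] at hholder
  refine ⟨hholder.1, ?_⟩
  calc (∑' i, f i * g i) ^ 2 ≤ (√(∑' i, f i ^ 2) * √(∑' i, g i ^ 2)) ^ 2 :=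
        pow_le_pow_left₀ (tsum_nonneg fun i => mul_nonneg (hf0 i) (hg0 i)) hholder.2 2
    _ = (∑' i, f i ^ 2) * ∑' i, g i ^ 2 := by
        rw [mul_pow, sq_sqrt (tsum_nonneg fun i => sq_nonneg _),
          sq_sqrt (tsum_nonneg fun i => sq_nonneg _)]

theorem summable_sq_and_tsum_sq_le_of_le {κ : Type*} {g : κ → ℝ} {C : ℝ} (hg0 : ∀ k, 0 ≤ g k)
    (hgC : ∀ k, g k ≤ C) (hg : Summable g) :
    Summable (fun k => g k ^ 2) ∧ ∑' k, g k ^ 2 ≤ C * ∑' k, g k := by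
  have hsq_le : ∀ k, g k ^ 2 ≤ C * g k := fun k => by
    rw [sq]; exact mul_le_mul_of_nonneg_right (hgC k) (hg0 k)
  have hsq : Summable fun k => g k ^ 2 :=
    (hg.mul_left C).of_nonneg_of_le (fun k => sq_nonneg _) hsq_le
  exact ⟨hsq, (hsq.tsum_le_tsum hsq_le (hg.mul_left C)).trans_eq tsum_mul_left⟩

structure IsStochasticKernel {ι κ : Type*} (p : ι × κ → ℝ) : Prop where
  nonneg : ∀ i k, 0 ≤ p (i, k)
  hasSum_row : ∀ i, HasSum (fun k => p (i, k)) 1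

namespace IsStochasticKernel

variable {ι κ : Type*} {p : ι × κ → ℝ} (hp : IsStochasticKernel p)
include hp

theorem le_one (i : ι) (k : κ) : p (i, k) ≤ 1 :=
  le_hasSum (hp.hasSum_row i) k fun j _ => hp.nonneg i j

theorem summable_sq_row_and_tsum_le_one (i : ι) :
    Summable (fun k => p (i, k) ^ 2) ∧ ∑' k, p (i, k) ^ 2 ≤ 1 := by
  obtain ⟨hsq, hle⟩ := summable_sq_and_tsum_sq_le_of_le (hp.nonneg i) (hp.le_one i)
    (hp.hasSum_row i).summable
  rw [(hp.hasSum_row i).tsum_eq, mul_one] at hle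
  exact ⟨hsq, hle⟩

section NonnegRow

variable {a : ι → ℝ} (ha0 : ∀ i, 0 ≤ a i)
include ha0

theorem mul_col_le (i : ι) (k : κ) : a i * p (i, k) ≤ a i :=
  mul_le_of_le_one_right (ha0 i) (hp.le_one i k)

variable (ha : Summable a)
include ha

theorem summable_mul_col (k : κ) : Summable fun i => a i * p (i, k) :=
  ha.of_nonneg_of_le (fun i => mul_nonneg (ha0 i) (hp.nonneg i k)) (hp.mul_col_le ha0 · k)

theorem tsum_mul_col_le (k : κ) : ∑' i, a i * p (i, k) ≤ ∑' i, a i :=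
  (hp.summable_mul_col ha0 ha k).tsum_le_tsum (hp.mul_col_le ha0 · k) ha

theorem hasSum_tsum_mul_col : HasSum (fun k => ∑' i, a i * p (i, k)) (∑' i, a i) := by
  set F : ι × κ → ℝ := fun q => a q.1 * p q
  have hF0 : 0 ≤ F := fun q => mul_nonneg (ha0 q.1) (hp.nonneg q.1 q.2)
  have hrow : ∀ i, HasSum (fun k => F (i, k)) (a i) := fun i => by
    simpa only [mul_one] using (hp.hasSum_row i).mul_left (a i)
  have hF : Summable F := (summable_prod_of_nonneg hF0).2
    ⟨fun i => (hrow i).summable, by simpa only [(hrow _).tsum_eq] using ha⟩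
  have hF_sum : HasSum F (∑' i, a i) := by
    rw [(hF.hasSum.prod_fiberwise hrow).tsum_eq]
    exact hF.hasSum
  exact ((Equiv.prodComm κ ι).hasSum_iff.mpr hF_sum).prod_fiberwise fun k =>
    (hp.summable_mul_col ha0 ha k).hasSum

end NonnegRow

theorem abs_tsum_mul_col_le {x : ι → ℝ} (hx : Summable fun i => |x i|) (k : κ) :
    |∑' i, x i * p (i, k)| ≤ ∑' i, |x i| * p (i, k) := by
  have hnorm : ∀ i, ‖x i * p (i, k)‖ = |x i| * p (i, k) := fun i => by
    rw [Real.norm_eq_abs, abs_mul, abs_of_nonneg (hp.nonneg i k)]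
  have hcol := hp.summable_mul_col (fun i => abs_nonneg (x i)) hx k
  calc |∑' i, x i * p (i, k)| = ‖∑' i, x i * p (i, k)‖ := (Real.norm_eq_abs _).symm
    _ ≤ ∑' i, ‖x i * p (i, k)‖ := norm_tsum_le_tsum_norm (by simpa only [hnorm] using hcol)
    _ = ∑' i, |x i| * p (i, k) := tsum_congr hnorm

theorem summable_sq_col_and_tsum_le {x : ι → ℝ} (hx : Summable fun i => |x i|) :
    Summable (fun k => |∑' i, x i * p (i, k)| ^ 2) ∧
      ∑' k, |∑' i, x i * p (i, k)| ^ 2 ≤ (∑' i, |x i|) ^ 2 := by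
  have hx0 : ∀ i, 0 ≤ |x i| := fun i => abs_nonneg (x i)
  have hg := hp.hasSum_tsum_mul_col hx0 hx
  obtain ⟨hg_sq, hg_le⟩ := summable_sq_and_tsum_sq_le_of_le
    (fun k => tsum_nonneg fun i => mul_nonneg (hx0 i) (hp.nonneg i k))
    (hp.tsum_mul_col_le hx0 hx) hg.summable
  have hdom : ∀ k, |∑' i, x i * p (i, k)| ^ 2 ≤ (∑' i, |x i| * p (i, k)) ^ 2 := fun k =>
    pow_le_pow_left₀ (abs_nonneg _) (hp.abs_tsum_mul_col_le hx k) 2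
  have hsum := hg_sq.of_nonneg_of_le (fun k => sq_nonneg _) hdom
  refine ⟨hsum, (hsum.tsum_le_tsum hdom hg_sq).trans ?_⟩
  rwa [hg.tsum_eq, ← sq] at hg_le

end IsStochasticKernel

/-- every row-stochastic kernel `p` has columns (of the structure
constants `c_{ki} = p(i,k)`) with ℓ²-norm at most `1`, and hence defines a Markov
Hilbert evolution algebra: the product `(v·w)_k = ∑_i v_i w_i p(i,k)` is
square-summable with `‖v·w‖² ≤ ‖v‖² ‖w‖²`. -/
theorem markov_kernel_defines_HEA (p : ℕ × ℕ → ℝ)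
    (hnn : ∀ i k, 0 ≤ p (i, k))
    (hrow : ∀ i, HasSum (fun k => p (i, k)) 1) :
    (∀ i, Summable (fun k => p (i, k) ^ 2) ∧ ∑' k, p (i, k) ^ 2 ≤ 1) ∧
    ∀ v w : ℕ → ℝ, Summable (fun i => |v i| ^ 2) → Summable (fun i => |w i| ^ 2) →
      Summable (fun k => |∑' i, v i * w i * p (i, k)| ^ 2) ∧
      ∑' k, |∑' i, v i * w i * p (i, k)| ^ 2 ≤
        (∑' i, |v i| ^ 2) * ∑' i, |w i| ^ 2 := by
  have hp : IsStochasticKernel p := ⟨hnn, hrow⟩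
  refine ⟨hp.summable_sq_row_and_tsum_le_one, fun v w hv hw => ?_⟩
  obtain ⟨hvw, hcs⟩ := summable_mul_and_sq_tsum_mul_le (fun i => abs_nonneg (v i))
    (fun i => abs_nonneg (w i)) hv hw
  simp only [← abs_mul] at hvw hcs
  obtain ⟨hsum, hle⟩ := hp.summable_sq_col_and_tsum_le hvw
  exact ⟨hsum, hle.trans hcs⟩
end

section
/- Let p : ℕ × ℕ → ℝ be a row-stochastic kernel (p(i,k) ≥ 0, ∑_{k=1}^∞ p(i,k) = 1 for all i), and suppose there exist α_k, β_i > 0 and M₁, M₂ > 0 with ∑_{k=1}^∞ p(i,k) α_k ≤ M₁ β_i for all i and ∑_{i=1}^∞ p(i,k) β_i ≤ M₂ α_k for all k. Define the n-step transition probabilities recursively by p^{(1)} := p and p^{(n+1)}(i,j) := ∑_{k=1}^∞ p^{(n)}(i,k) p(k,j). Then the evolution operator C : ℓ² → ℓ² given by (C v)_k = ∑_{i=1}^∞ p(i,k) v_i is a well-defined bounded linear operator with ‖C‖ ≤ (M₁M₂)^{1/2}, and for every i ∈ ℕ and n ≥ 1, the n-th iterate satisfies C^n(e_i) = ∑_{k=1}^∞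 p^{(n)}(i,k) e_k, i.e. (C^n e_i)_k = p^{(n)}(i,k) for all k, where e_i denotes the i-th standard unit sequence. -/
/-!
The bound is the Schur test. By Cauchy–Schwarz,
`(∑ᵢ p(i,k) vᵢ)² ≤ (∑ᵢ p(i,k) βᵢ) (∑ᵢ p(i,k) vᵢ² / βᵢ) ≤ M₂ αₖ ∑ᵢ p(i,k) vᵢ² / βᵢ`,
and summing over `k`, exchanging the sums and using `∑ₖ p(i,k) αₖ ≤ M₁ βᵢ` gives
`‖C v‖² ≤ M₁ M₂ ‖v‖²`. Run in `ℝ≥0∞` on `|vᵢ|`, the same estimate also shows that the series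
defining `(C v)ₖ` converge absolutely. The iterates then satisfy
`(Cⁿ⁺¹ eᵢ)ₖ = ∑ₘ p(m,k) (Cⁿ eᵢ)ₘ`, which is the Chapman–Kolmogorov recursion.
-/

/-- The `n`-step transition kernel: `nStep p 0 = p` represents `p⁽¹⁾`, and
`nStep p n` represents `p⁽ⁿ⁺¹⁾`, via the Chapman–Kolmogorov recursion
`p⁽ⁿ⁺¹⁾(i,j) = ∑_k p⁽ⁿ⁾(i,k) p(k,j)`. -/
noncomputable def nStep (p : ℕ × ℕ → ℝ) : ℕ → ℕ × ℕ → ℝ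
  | 0 => p
  | n + 1 => fun ij => ∑' k, nStep p n (ij.1, k) * p (k, ij.2)

open scoped ENNReal NNReal

namespace ENNReal

variable {ι κ : Type*}

theorem rpow_two_inv_sq (x : ℝ≥0∞) : (x ^ (2⁻¹ : ℝ)) ^ 2 = x := by
  simpa using rpow_inv_natCast_pow two_ne_zero x

theorem tsum_sq_le_tsum_mul_tsum_of_sq_le_mul {r f g : ι → ℝ≥0∞}
    (h : ∀ i, r i ^ 2 ≤ f i * g i) : (∑' i, r i) ^ 2 ≤ (∑' i, f i) * ∑' i, g i := by
  have hr : ∀ i, r i ≤ f i ^ (2⁻¹ : ℝ) * g i ^ (2⁻¹ : ℝ) := fun i => by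
    rw [← ENNReal.pow_le_pow_left_iff two_ne_zero, mul_pow, rpow_two_inv_sq, rpow_two_inv_sq]
    exact h i
  have hsum : ∑' i, r i ≤ (∑' i, f i) ^ (2⁻¹ : ℝ) * (∑' i, g i) ^ (2⁻¹ : ℝ) := by
    rw [ENNReal.tsum_eq_iSup_sum]
    refine iSup_le fun s => ?_
    calc ∑ i ∈ s, r i ≤ ∑ i ∈ s, f i ^ (2⁻¹ : ℝ) * g i ^ (2⁻¹ : ℝ) :=
          Finset.sum_le_sum fun i _ => hr i
      _ ≤ (∑ i ∈ s, f i) ^ (2⁻¹ : ℝ) * (∑ i ∈ s, g i) ^ (2⁻¹ : ℝ) := by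
          simpa [rpow_two_inv_sq] using inner_le_Lp_mul_Lq s (fun i => f i ^ (2⁻¹ : ℝ))
            (fun i => g i ^ (2⁻¹ : ℝ)) Real.HolderConjugate.two_two
      _ ≤ (∑' i, f i) ^ (2⁻¹ : ℝ) * (∑' i, g i) ^ (2⁻¹ : ℝ) := by
          gcongr <;> exact ENNReal.sum_le_tsum s
  calc (∑' i, r i) ^ 2 ≤ ((∑' i, f i) ^ (2⁻¹ : ℝ) * (∑' i, g i) ^ (2⁻¹ : ℝ)) ^ 2 := by gcongr
    _ = (∑' i, f i) * ∑' i, g i := by rw [mul_pow, rpow_two_inv_sq, rpow_two_inv_sq]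

theorem tsum_sq_tsum_mul_le_of_schur (K : ι → κ → ℝ≥0∞) {A : κ → ℝ≥0∞} {B : ι → ℝ≥0∞}
    {N₁ N₂ : ℝ≥0∞} (hB₀ : ∀ i, B i ≠ 0) (hB : ∀ i, B i ≠ ∞)
    (h₁ : ∀ i, ∑' k, K i k * A k ≤ N₁ * B i) (h₂ : ∀ k, ∑' i, K i k * B i ≤ N₂ * A k)
    (V : ι → ℝ≥0∞) : ∑' k, (∑' i, K i k * V i) ^ 2 ≤ N₁ * N₂ * ∑' i, V i ^ 2 := by
  have hcs : ∀ k, (∑' i, K i k * V i) ^ 2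
      ≤ (∑' i, K i k * B i) * ∑' i, K i k * (V i ^ 2 / B i) := fun k =>
    tsum_sq_le_tsum_mul_tsum_of_sq_le_mul fun i => le_of_eq <| by
      rw [div_eq_mul_inv, show K i k * B i * (K i k * (V i ^ 2 * (B i)⁻¹))
        = (K i k * V i) ^ 2 * (B i * (B i)⁻¹) by ring, ENNReal.mul_inv_cancel (hB₀ i) (hB i),
        mul_one]
  calc ∑' k, (∑' i, K i k * V i) ^ 2
      ≤ ∑' k, N₂ * A k * ∑' i, K i k * (V i ^ 2 / B i) :=
        ENNReal.tsum_le_tsum fun k => (hcs k).trans (mul_le_mul_left (h₂ k) _)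
    _ = N₂ * ∑' i, V i ^ 2 / B i * ∑' k, K i k * A k := by
        simp_rw [← ENNReal.tsum_mul_left]
        rw [ENNReal.tsum_comm]
        exact tsum_congr fun i => tsum_congr fun k => by ring
    _ ≤ N₂ * ∑' i, V i ^ 2 / B i * (N₁ * B i) := by
        gcongr with i
        exact h₁ i
    _ = N₁ * N₂ * ∑' i, V i ^ 2 := by
        simp_rw [mul_left_comm _ N₁, ENNReal.div_mul_cancel (hB₀ _) (hB _), ENNReal.tsum_mul_left]
        ring

theorem tsum_enorm_mul_ofReal_le {f g : ι → ℝ} {a : ℝ} (hf : ∀ i, 0 ≤ f i)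
    (hg : ∀ i, 0 ≤ g i) (hs : Summable fun i => f i * g i) (h : ∑' i, f i * g i ≤ a) :
    ∑' i, ‖f i‖ₑ * ENNReal.ofReal (g i) ≤ ENNReal.ofReal a := by
  simp_rw [Real.enorm_of_nonneg (hf _), ← ENNReal.ofReal_mul (hf _)]
  rw [← ENNReal.ofReal_tsum_of_nonneg (fun i => mul_nonneg (hf i) (hg i)) hs]
  exact ENNReal.ofReal_le_ofReal h

end ENNReal

section lpTwo

variable {ι : Type*} {E : ι → Type*} [∀ i, NormedAddCommGroup (E i)]

theorem memℓp_two_of_tsum_enorm_sq_ne_top {f : ∀ i, E i} (hf : ∑' i, ‖f i‖ₑ ^ 2 ≠ ∞) :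
    Memℓp f 2 := by
  have hs : Summable fun i => ‖f i‖₊ ^ 2 := by
    simpa [enorm_eq_nnnorm, ← ENNReal.coe_pow, ENNReal.tsum_coe_ne_top_iff_summable] using hf
  exact memℓp_gen <| by simpa using NNReal.summable_coe.2 hs

theorem lp.tsum_enorm_sq (f : lp E 2) : ∑' i, ‖f i‖ₑ ^ 2 = ‖f‖ₑ ^ 2 := by
  have hs : Summable fun i => ‖f i‖₊ ^ 2 := by
    simpa [← NNReal.summable_coe] using (lp.memℓp f).summable (p := 2) (by norm_num)
  have h : ‖f‖₊ ^ 2 = ∑' i, ‖f i‖₊ ^ 2 := NNReal.coe_injective <| by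
    simpa [NNReal.coe_tsum] using lp.norm_rpow_eq_tsum (p := 2) (by norm_num) f
  simp only [enorm_eq_nnnorm, ← ENNReal.coe_pow, h, ENNReal.coe_tsum hs]

end lpTwo

section KernelOperator

variable {𝕜 ι κ : Type*} [NontriviallyNormedField 𝕜] [CompleteSpace 𝕜]

theorem exists_lp_two_kernel_clm {K : ι → κ → 𝕜} {c : ℝ≥0}
    (hK : ∀ V : ι → ℝ≥0∞, ∑' k, (∑' i, ‖K i k‖ₑ * V i) ^ 2 ≤ c ^ 2 * ∑' i, V i ^ 2) :
    ∃ T : lp (fun _ : ι => 𝕜) 2 →L[𝕜] lp (fun _ : κ => 𝕜) 2,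
      (∀ v k, T v k = ∑' i, K i k * v i) ∧ ‖T‖ ≤ c := by
  have hbound (v : lp (fun _ : ι => 𝕜) 2) :
      ∑' k, (∑' i, ‖K i k * v i‖ₑ) ^ 2 ≤ c ^ 2 * ‖v‖ₑ ^ 2 := by
    simpa only [enorm_mul, lp.tsum_enorm_sq] using hK fun i => ‖v i‖ₑ
  have hfin (v : lp (fun _ : ι => 𝕜) 2) : ∑' k, (∑' i, ‖K i k * v i‖ₑ) ^ 2 ≠ ∞ :=
    ((hbound v).trans_lt (by finiteness)).ne
  have hsum (v : lp (fun _ : ι => 𝕜) 2) (k : κ) : Summable fun i => K i k * v i :=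
    .of_enorm fun h => hfin v <| ENNReal.tsum_eq_top_of_eq_top ⟨k, by rw [h]; simp⟩
  have hnorm (v : lp (fun _ : ι => 𝕜) 2) :
      ∑' k, ‖∑' i, K i k * v i‖ₑ ^ 2 ≤ c ^ 2 * ‖v‖ₑ ^ 2 :=
    (ENNReal.tsum_le_tsum fun k => pow_le_pow_left' enorm_tsum_le_tsum_enorm 2).trans (hbound v)
  let T : lp (fun _ : ι => 𝕜) 2 →ₗ[𝕜] lp (fun _ : κ => 𝕜) 2 :=
    { toFun v := ⟨fun k => ∑' i, K i k * v i,
        memℓp_two_of_tsum_enorm_sq_ne_top ((hnorm v).trans_lt (by finiteness)).ne⟩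
      map_add' v w := lp.ext <| funext fun k => by
        show ∑' i, K i k * (v + w) i = ∑' i, K i k * v i + ∑' i, K i k * w i
        simp only [lp.coeFn_add, Pi.add_apply, mul_add]
        exact (hsum v k).tsum_add (hsum w k)
      map_smul' a v := lp.ext <| funext fun k => by
        simp [mul_left_comm _ a, tsum_mul_left] }
  have hT (v : lp (fun _ : ι => 𝕜) 2) : ‖T v‖ ≤ c * ‖v‖ := by
    have h : ‖T v‖ₑ ^ 2 ≤ (c * ‖v‖ₑ) ^ 2 := by
      rw [← lp.tsum_enorm_sq, mul_pow]
      exact hnorm v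
    rw [ENNReal.pow_le_pow_left_iff two_ne_zero, enorm_eq_nnnorm, enorm_eq_nnnorm] at h
    exact_mod_cast h
  exact ⟨T.mkContinuous c hT, fun v k => rfl, T.mkContinuous_norm_le c.2 hT⟩

end KernelOperator

theorem pow_succ_apply_single_eq_nStep {p : ℕ × ℕ → ℝ}
    {C : lp (fun _ : ℕ => ℝ) 2 →L[ℝ] lp (fun _ : ℕ => ℝ) 2}
    (hC : ∀ v k, C v k = ∑' i, p (i, k) * v i) (i n k : ℕ) :
    (C ^ (n + 1)) (lp.single 2 i 1) k = nStep p n (i, k) := by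
  induction n generalizing k with
  | zero =>
    rw [pow_one, hC, tsum_eq_single i fun m hm => by rw [lp.single_apply_ne 2 i _ hm, mul_zero],
      lp.single_apply_self, mul_one]
    rfl
  | succ n ih =>
    rw [pow_succ', mul_apply_eq_comp, hC]
    simp only [ih, mul_comm (p _)]
    rfl

theorem markov_evolution_operator_iterates_general (p : ℕ × ℕ → ℝ) (α β : ℕ → ℝ) (M₁ M₂ : ℝ)
    (hnn : ∀ i k, 0 ≤ p (i, k))
    (hα : ∀ k, 0 < α k) (hβ : ∀ i, 0 < β i) (hM₁ : 0 < M₁) (hM₂ : 0 < M₂)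
    (h1 : ∀ i, Summable (fun k => p (i, k) * α k) ∧
      ∑' k, p (i, k) * α k ≤ M₁ * β i)
    (h2 : ∀ k, Summable (fun i => p (i, k) * β i) ∧
      ∑' i, p (i, k) * β i ≤ M₂ * α k) :
    ∃ C : lp (fun _ : ℕ => ℝ) 2 →L[ℝ] lp (fun _ : ℕ => ℝ) 2,
      (∀ (v : lp (fun _ : ℕ => ℝ) 2) (k : ℕ), C v k = ∑' i, p (i, k) * v i) ∧
      ‖C‖ ≤ Real.sqrt (M₁ * M₂) ∧
      ∀ (i n k : ℕ), ((C ^ (n + 1)) (lp.single 2 i 1)) k = nStep p n (i, k) := by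
  have hSchur (V : ℕ → ℝ≥0∞) : ∑' k, (∑' i, ‖p (i, k)‖ₑ * V i) ^ 2
      ≤ ENNReal.ofReal (Real.sqrt (M₁ * M₂)) ^ 2 * ∑' i, V i ^ 2 := by
    rw [← ENNReal.ofReal_pow (Real.sqrt_nonneg _),
      Real.sq_sqrt (mul_nonneg hM₁.le hM₂.le), ENNReal.ofReal_mul hM₁.le]
    refine ENNReal.tsum_sq_tsum_mul_le_of_schur (fun i k => ‖p (i, k)‖ₑ)
      (A := fun k => ENNReal.ofReal (α k)) (B := fun i => ENNReal.ofReal (β i))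
      (fun i => by simpa using hβ i) (fun _ => ENNReal.ofReal_ne_top) (fun i => ?_) (fun k => ?_) V
    · rw [← ENNReal.ofReal_mul hM₁.le]
      exact ENNReal.tsum_enorm_mul_ofReal_le (hnn i) (fun k => (hα k).le) (h1 i).1 (h1 i).2
    · rw [← ENNReal.ofReal_mul hM₂.le]
      exact ENNReal.tsum_enorm_mul_ofReal_le (hnn · k) (fun i => (hβ i).le) (h2 k).1 (h2 k).2
  obtain ⟨C, hC, hCnorm⟩ := exists_lp_two_kernel_clm hSchur
  exact ⟨C, hC, hCnorm.trans_eq (Real.coe_toNNReal _ (Real.sqrt_nonneg _)),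
    pow_succ_apply_single_eq_nStep hC⟩

/-- for a row-stochastic kernel satisfying the Schur-test conditions,
the evolution operator `(C v)_k = ∑_i p(i,k) v_i` is a bounded operator on ℓ² with
`‖C‖ ≤ √(M₁M₂)`, and its `n`-th iterate applied to the basis vector `e_i` has
coordinates given by the `n`-step transition probabilities:
`(Cⁿ e_i)_k = p⁽ⁿ⁾(i,k)` for `n ≥ 1`. -/
theorem markov_evolution_operator_iterates (p : ℕ × ℕ → ℝ) (α β : ℕ → ℝ) (M₁ M₂ : ℝ)
    (hnn : ∀ i k, 0 ≤ p (i, k))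
    (hrow : ∀ i, HasSum (fun k => p (i, k)) 1)
    (hα : ∀ k, 0 < α k) (hβ : ∀ i, 0 < β i) (hM₁ : 0 < M₁) (hM₂ : 0 < M₂)
    (h1 : ∀ i, Summable (fun k => p (i, k) * α k) ∧
      ∑' k, p (i, k) * α k ≤ M₁ * β i)
    (h2 : ∀ k, Summable (fun i => p (i, k) * β i) ∧
      ∑' i, p (i, k) * β i ≤ M₂ * α k) :
    ∃ C : lp (fun _ : ℕ => ℝ) 2 →L[ℝ] lp (fun _ : ℕ => ℝ) 2,
      (∀ (v : lp (fun _ : ℕ => ℝ) 2) (k : ℕ), C v k = ∑' i, p (i, k) * v i) ∧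
      ‖C‖ ≤ Real.sqrt (M₁ * M₂) ∧
      ∀ (i n k : ℕ), ((C ^ (n + 1)) (lp.single 2 i 1)) k = nStep p n (i, k) :=
  markov_evolution_operator_iterates_general p α β M₁ M₂ hnn hα hβ hM₁ hM₂ h1 h2
end

section
/- Let p : ℕ × ℕ → ℝ be a row-stochastic kernel (p(i,k) ≥ 0, ∑_{k=1}^∞ p(i,k) = 1 for all i) and suppose there is M > 0 such that for every k the family (p(i,k))_i is summable with ∑_{i=1}^∞ p(i,k) ≤ M. Then the evolution operator C : ℓ² → ℓ², (C v)_k = ∑_{i=1}^∞ p(i,k) v_i, is a well-defined bounded linear operator with ‖C‖ ≤ M^{1/2}. -/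
/-!
Schur test with unit weights: by Cauchy–Schwarz against the column weights,
`(∑ᵢ p(i,k) vᵢ)² ≤ (∑ᵢ p(i,k)) (∑ᵢ p(i,k) vᵢ²) ≤ M ∑ᵢ p(i,k) vᵢ²`, and summing over `k`,
the row sums `∑ₖ p(i,k) = 1` give `‖C v‖² ≤ M ‖v‖²`.
-/

open scoped ENNReal lp

section WeightedCauchySchwarz

variable {ι : Type*} {w u : ι → ℝ} {B : ℝ}

theorem sum_abs_mul_le_sqrt_of_tsum_le (hw : ∀ i, 0 ≤ w i) (hw_sum : Summable w)
    (hB : ∑' i, w i ≤ B) (hwu : Summable fun i => w i * u i ^ 2) (s : Finset ι) :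
    ∑ i ∈ s, |w i * u i| ≤ √(B * ∑' i, w i * u i ^ 2) := by
  have hwu_nonneg : ∀ i, 0 ≤ w i * u i ^ 2 := fun i => mul_nonneg (hw i) (sq_nonneg _)
  refine Real.le_sqrt_of_sq_le ?_
  calc (∑ i ∈ s, |w i * u i|) ^ 2 ≤ (∑ i ∈ s, w i) * ∑ i ∈ s, w i * u i ^ 2 :=
        Finset.sum_sq_le_sum_mul_sum_of_sq_le_mul s (fun i _ => hw i) (fun i _ => hwu_nonneg i)
          fun i _ => le_of_eq (by rw [sq_abs]; ring)
    _ ≤ B * ∑' i, w i * u i ^ 2 :=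
        mul_le_mul ((hw_sum.sum_le_tsum s fun i _ => hw i).trans hB)
          (hwu.sum_le_tsum s fun i _ => hwu_nonneg i) (Finset.sum_nonneg fun i _ => hwu_nonneg i)
          ((tsum_nonneg hw).trans hB)

theorem summable_mul_of_tsum_le (hw : ∀ i, 0 ≤ w i) (hw_sum : Summable w)
    (hB : ∑' i, w i ≤ B) (hwu : Summable fun i => w i * u i ^ 2) :
    Summable fun i => w i * u i :=
  (summable_of_sum_le (fun _ => abs_nonneg _)
    (sum_abs_mul_le_sqrt_of_tsum_le hw hw_sum hB hwu)).of_abs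

theorem sq_tsum_mul_le_of_tsum_le (hw : ∀ i, 0 ≤ w i) (hw_sum : Summable w)
    (hB : ∑' i, w i ≤ B) (hwu : Summable fun i => w i * u i ^ 2) :
    (∑' i, w i * u i) ^ 2 ≤ B * ∑' i, w i * u i ^ 2 := by
  have habs : |∑' i, w i * u i| ≤ √(B * ∑' i, w i * u i ^ 2) :=
    calc |∑' i, w i * u i| ≤ ∑' i, |w i * u i| := by
          simpa only [Real.norm_eq_abs] using
            norm_tsum_le_tsum_norm (summable_mul_of_tsum_le hw hw_sum hB hwu).norm
      _ ≤ √(B * ∑' i, w i * u i ^ 2) :=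
          Real.tsum_le_of_sum_le (fun _ => abs_nonneg _)
            (sum_abs_mul_le_sqrt_of_tsum_le hw hw_sum hB hwu)
  have hB_nonneg : 0 ≤ B * ∑' i, w i * u i ^ 2 :=
    mul_nonneg ((tsum_nonneg hw).trans hB) (tsum_nonneg fun i => mul_nonneg (hw i) (sq_nonneg _))
  exact (Real.sq_le hB_nonneg).2 (abs_le.1 habs)

end WeightedCauchySchwarz

section SchurTest

variable {ι κ : Type*} {a : ι → κ → ℝ} {A B : ℝ} {u : ι → ℝ}

theorem summable_mul_sq_of_row_tsum_le (ha : ∀ i k, 0 ≤ a i k)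
    (hrow : ∀ i, Summable (a i) ∧ ∑' k, a i k ≤ A) (hu : Summable fun i => u i ^ 2) (k : κ) :
    Summable fun i => a i k * u i ^ 2 :=
  (hu.mul_left A).of_nonneg_of_le (fun i => mul_nonneg (ha i k) (sq_nonneg _)) fun i =>
    mul_le_mul_of_nonneg_right (((hrow i).1.le_tsum k fun j _ => ha i j).trans (hrow i).2)
      (sq_nonneg _)

theorem sum_tsum_mul_sq_le_of_row_tsum_le (ha : ∀ i k, 0 ≤ a i k)
    (hrow : ∀ i, Summable (a i) ∧ ∑' k, a i k ≤ A) (hu : Summable fun i => u i ^ 2)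
    (t : Finset κ) :
    ∑ k ∈ t, ∑' i, a i k * u i ^ 2 ≤ A * ∑' i, u i ^ 2 := by
  have hcol_sum k (_ : k ∈ t) := summable_mul_sq_of_row_tsum_le ha hrow hu k
  rw [← Summable.tsum_finsetSum hcol_sum, ← hu.tsum_mul_left]
  refine Summable.tsum_le_tsum (fun i => ?_) (summable_sum hcol_sum) (hu.mul_left A)
  rw [← Finset.sum_mul]
  exact mul_le_mul_of_nonneg_right
    (((hrow i).1.sum_le_tsum t fun j _ => ha i j).trans (hrow i).2) (sq_nonneg _)

theorem sum_sq_tsum_mul_le_of_schur (ha : ∀ i k, 0 ≤ a i k)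
    (hrow : ∀ i, Summable (a i) ∧ ∑' k, a i k ≤ A)
    (hcol : ∀ k, Summable (a · k) ∧ ∑' i, a i k ≤ B) (hB : 0 ≤ B)
    (hu : Summable fun i => u i ^ 2) (t : Finset κ) :
    ∑ k ∈ t, (∑' i, a i k * u i) ^ 2 ≤ A * B * ∑' i, u i ^ 2 :=
  calc ∑ k ∈ t, (∑' i, a i k * u i) ^ 2 ≤ ∑ k ∈ t, B * ∑' i, a i k * u i ^ 2 :=
        Finset.sum_le_sum fun k _ => sq_tsum_mul_le_of_tsum_le (ha · k) (hcol k).1 (hcol k).2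
          (summable_mul_sq_of_row_tsum_le ha hrow hu k)
    _ ≤ B * (A * ∑' i, u i ^ 2) := by
        rw [← Finset.mul_sum]
        exact mul_le_mul_of_nonneg_left (sum_tsum_mul_sq_le_of_row_tsum_le ha hrow hu t) hB
    _ = A * B * ∑' i, u i ^ 2 := by ring

end SchurTest

theorem lp.summable_sq {ι : Type*} (v : ℓ²(ι, ℝ)) : Summable fun i => v i ^ 2 := by
  simpa using (lp.memℓp v).summable (p := 2) (by norm_num)

theorem lp.norm_sq_eq_tsum_sq {ι : Type*} (v : ℓ²(ι, ℝ)) : ‖v‖ ^ 2 = ∑' i, v i ^ 2 := by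
  simpa using lp.norm_rpow_eq_tsum (p := 2) (by norm_num) v

section KernelOperator

variable {ι κ : Type*} {a : ι → κ → ℝ} {A B : ℝ}

theorem memℓp_two_tsum_mul_of_schur (ha : ∀ i k, 0 ≤ a i k)
    (hrow : ∀ i, Summable (a i) ∧ ∑' k, a i k ≤ A)
    (hcol : ∀ k, Summable (a · k) ∧ ∑' i, a i k ≤ B) (hB : 0 ≤ B) (v : ℓ²(ι, ℝ)) :
    Memℓp (fun k => ∑' i, a i k * v i) 2 :=
  memℓp_gen' fun t => by
    simpa using sum_sq_tsum_mul_le_of_schur ha hrow hcol hB (lp.summable_sq v) t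

theorem summable_mul_lp_of_schur (ha : ∀ i k, 0 ≤ a i k)
    (hrow : ∀ i, Summable (a i) ∧ ∑' k, a i k ≤ A)
    (hcol : ∀ k, Summable (a · k) ∧ ∑' i, a i k ≤ B) (v : ℓ²(ι, ℝ)) (k : κ) :
    Summable fun i => a i k * v i :=
  summable_mul_of_tsum_le (ha · k) (hcol k).1 (hcol k).2
    (summable_mul_sq_of_row_tsum_le ha hrow (lp.summable_sq v) k)

variable (a) in
noncomputable def kernelOperator (ha : ∀ i k, 0 ≤ a i k)
    (hrow : ∀ i, Summable (a i) ∧ ∑' k, a i k ≤ A)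
    (hcol : ∀ k, Summable (a · k) ∧ ∑' i, a i k ≤ B) (hB : 0 ≤ B) :
    ℓ²(ι, ℝ) →ₗ[ℝ] ℓ²(κ, ℝ) where
  toFun v := ⟨fun k => ∑' i, a i k * v i, memℓp_two_tsum_mul_of_schur ha hrow hcol hB v⟩
  map_add' v w := lp.ext <| funext fun k => by
    change ∑' i, a i k * (v + w) i = ∑' i, a i k * v i + ∑' i, a i k * w i
    simp only [lp.coeFn_add, Pi.add_apply, mul_add]
    exact (summable_mul_lp_of_schur ha hrow hcol v k).tsum_add
      (summable_mul_lp_of_schur ha hrow hcol w k)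
  map_smul' c v := lp.ext <| funext fun k => by
    change ∑' i, a i k * (c • v) i = c * ∑' i, a i k * v i
    simp only [lp.coeFn_smul, Pi.smul_apply, smul_eq_mul, mul_left_comm _ c]
    exact tsum_mul_left

@[simp]
theorem kernelOperator_apply_apply (ha : ∀ i k, 0 ≤ a i k)
    (hrow : ∀ i, Summable (a i) ∧ ∑' k, a i k ≤ A)
    (hcol : ∀ k, Summable (a · k) ∧ ∑' i, a i k ≤ B) (hB : 0 ≤ B) (v : ℓ²(ι, ℝ)) (k : κ) :
    kernelOperator a ha hrow hcol hB v k = ∑' i, a i k * v i :=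
  rfl

theorem norm_kernelOperator_apply_le (ha : ∀ i k, 0 ≤ a i k)
    (hrow : ∀ i, Summable (a i) ∧ ∑' k, a i k ≤ A)
    (hcol : ∀ k, Summable (a · k) ∧ ∑' i, a i k ≤ B) (hA : 0 ≤ A) (hB : 0 ≤ B)
    (v : ℓ²(ι, ℝ)) :
    ‖kernelOperator a ha hrow hcol hB v‖ ≤ √(A * B) * ‖v‖ := by
  refine lp.norm_le_of_forall_sum_le (by norm_num) (by positivity) fun t => ?_
  simp only [ENNReal.toReal_ofNat, Real.rpow_two, Real.norm_eq_abs, sq_abs,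
    kernelOperator_apply_apply]
  rw [mul_pow, Real.sq_sqrt (mul_nonneg hA hB), lp.norm_sq_eq_tsum_sq]
  exact sum_sq_tsum_mul_le_of_schur ha hrow hcol hB (lp.summable_sq v) t

theorem exists_clm_apply_eq_tsum_mul_and_norm_le_of_schur (ha : ∀ i k, 0 ≤ a i k)
    (hrow : ∀ i, Summable (a i) ∧ ∑' k, a i k ≤ A)
    (hcol : ∀ k, Summable (a · k) ∧ ∑' i, a i k ≤ B) (hA : 0 ≤ A) (hB : 0 ≤ B) :
    ∃ C : ℓ²(ι, ℝ) →L[ℝ] ℓ²(κ, ℝ),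
      (∀ (v : ℓ²(ι, ℝ)) (k : κ), C v k = ∑' i, a i k * v i) ∧ ‖C‖ ≤ √(A * B) :=
  have hC := norm_kernelOperator_apply_le ha hrow hcol hA hB
  ⟨(kernelOperator a ha hrow hcol hB).mkContinuous _ hC, fun _ _ => rfl,
    LinearMap.mkContinuous_norm_le _ (Real.sqrt_nonneg _) hC⟩

end KernelOperator

/-- for a row-stochastic kernel whose column sums are uniformly
bounded by `M`, the evolution operator `(C v)_k = ∑_i p(i,k) v_i` is a
well-defined bounded linear operator on ℓ² with `‖C‖ ≤ √M`. -/
theorem evolution_operator_bounded_of_column_sums (p : ℕ × ℕ → ℝ) (M : ℝ)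
    (hM : 0 < M)
    (hnn : ∀ i k, 0 ≤ p (i, k))
    (hrow : ∀ i, HasSum (fun k => p (i, k)) 1)
    (hcol : ∀ k, Summable (fun i => p (i, k)) ∧ ∑' i, p (i, k) ≤ M) :
    ∃ C : lp (fun _ : ℕ => ℝ) 2 →L[ℝ] lp (fun _ : ℕ => ℝ) 2,
      (∀ (v : lp (fun _ : ℕ => ℝ) 2) (k : ℕ), C v k = ∑' i, p (i, k) * v i) ∧
      ‖C‖ ≤ Real.sqrt M := by
  simpa using exists_clm_apply_eq_tsum_mul_and_norm_le_of_schur (a := fun i k => p (i, k))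
    (A := 1) hnn (fun i => ⟨(hrow i).summable, (hrow i).tsum_eq.le⟩) hcol
    zero_le_one hM.le
end

section
/- Fix p ∈ (0,1) and define the house-of-cards transition kernel on (ℕ ∪ {0})² with constant parameter: q(i,0) = p and q(i, i+1) = 1 − p for every i ≥ 0, and q(i,k) = 0 otherwise. Then there do NOT exist positive reals α_k > 0, β_i > 0 (i, k ∈ ℕ ∪ {0}) and constants M₁, M₂ > 0 such that ∑_{k=0}^∞ q(i,k) α_k ≤ M₁ β_i for all i and the family (q(i,k) β_i)_i is summable with ∑_{i=0}^∞ q(i,k) β_i ≤ M₂ α_k for all k. -/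
/-! If every state jumps to one fixed state `k₀` with probability at least `c > 0`, the row
condition gives `c α k₀ ≤ M₁ β i` for every `i`, so `β` is bounded away from zero, whereas the
column condition at `k₀` makes `β` summable and hence forces `β i → 0`. -/

open Filter Topology

theorem not_summable_column_of_row_bound {q : ℕ × ℕ → ℝ} (hq : ∀ i k, 0 ≤ q (i, k))
    {k₀ : ℕ} {c : ℝ} (hc : 0 < c) (hk₀ : ∀ i, c ≤ q (i, k₀)) {α β : ℕ → ℝ} {M₁ : ℝ}
    (hα : ∀ k, 0 < α k) (hβ : ∀ i, 0 ≤ β i)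
    (hrow : ∀ i, Summable (fun k => q (i, k) * α k) ∧ ∑' k, q (i, k) * α k ≤ M₁ * β i) :
    ¬ Summable fun i => q (i, k₀) * β i := by
  intro hcol
  have hβ_summable : Summable β := by
    refine (summable_mul_left_iff hc.ne').mp (hcol.of_nonneg_of_le ?_ ?_)
    · exact fun i => mul_nonneg hc.le (hβ i)
    · exact fun i => mul_le_mul_of_nonneg_right (hk₀ i) (hβ i)
  have hlower : ∀ i, c * α k₀ ≤ M₁ * β i := fun i =>
    calc c * α k₀ ≤ q (i, k₀) * α k₀ := mul_le_mul_of_nonneg_right (hk₀ i) (hα k₀).le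
      _ ≤ ∑' k, q (i, k) * α k :=
        (hrow i).1.le_tsum k₀ fun k _ => mul_nonneg (hq i k) (hα k).le
      _ ≤ M₁ * β i := (hrow i).2
  have hlim : Tendsto (fun i => M₁ * β i) atTop (𝓝 0) := by
    simpa using hβ_summable.tendsto_atTop_zero.const_mul M₁
  exact (mul_pos hc (hα k₀)).not_ge (ge_of_tendsto' hlim hlower)

/-- house-of-cards with constant parameter: for the kernel
`q(i,0) = p`, `q(i,i+1) = 1 - p` (with `0 < p < 1`), `q(i,k) = 0` otherwise,
there are NO positive weights `α, β` and constants `M₁, M₂ > 0` satisfying the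
Schur-test conditions. -/
theorem house_of_cards_constant_no_schur (p : ℝ) (hp : 0 < p) (hp1 : p < 1)
    (q : ℕ × ℕ → ℝ)
    (hq : ∀ i k, q (i, k) =
      if k = 0 then p else (if k = i + 1 then 1 - p else 0)) :
    ¬ ∃ (α β : ℕ → ℝ) (M₁ M₂ : ℝ), (∀ k, 0 < α k) ∧ (∀ i, 0 < β i) ∧
      0 < M₁ ∧ 0 < M₂ ∧
      (∀ i, Summable (fun k => q (i, k) * α k) ∧
        ∑' k, q (i, k) * α k ≤ M₁ * β i) ∧
      (∀ k, Summable (fun i => q (i, k) * β i) ∧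
        ∑' i, q (i, k) * β i ≤ M₂ * α k) := by
  rintro ⟨α, β, M₁, M₂, hα, hβ, -, -, hrow, hcol⟩
  have hq_nonneg : ∀ i k, 0 ≤ q (i, k) := fun i k => by
    rw [hq]
    split_ifs <;> linarith
  have hq_zero : ∀ i, p ≤ q (i, 0) := fun i => by simp [hq]
  exact not_summable_column_of_row_bound hq_nonneg hp hq_zero hα (fun i => (hβ i).le) hrow
    (hcol 0).1
end
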